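/- For all X, Y ∈ V, one has ‖√(XᵀX) − √(YᵀY)‖ ≤ √2 · d_σ(X,Y), where ‖√(XᵀX) − √(YᵀY)‖ is the Frobenius norm of the tuple (√(X_1ᵀX_1) − √(Y_1ᵀY_1), …, √(X_LᵀX_L) − √(Y_LᵀY_L)). -/

import Mathlib

/-!
Put a real matrix `X` into its self-adjoint dilation `S_X = [[0, Xᵀ], [X, 0]]`, whose absolute
value is `diag(√(XᵀX), √(XXᵀ))`. For self-adjoint `S, T` one has `tr(ST) ≤ tr(|S| |T|)`: writing
`S = S⁺ - S⁻` and `|S| = S⁺ + S⁻`, the difference is `2 tr(S⁺T⁻) + 2 tr(S⁻T⁺)`, and the trace of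
a product of positive matrices is nonnegative. Expanding the squares, this says
`‖|S| - |T|‖_F ≤ ‖S - T‖_F`. For `S_X, S_Y` the left side dominates `‖√(XᵀX) - √(YᵀY)‖_F` and
the right side is `√2 ‖X - Y‖_F`. Since `√(XᵀX)` does not change under `X ↦ -X`, the same bound
holds with `X + Y`, blockwise, and hence with `d_σ`.
-/

open scoped BigOperators
open Matrix

namespace GPR

variable {L : ℕ} {N R : Fin L → ℕ}

/-- The signal space: `L`-tuples of real `N ℓ × R ℓ` matrices. -/
abbrev V (N R : Fin L → ℕ) := ∀ ℓ : Fin L, Matrix (Fin (N ℓ)) (Fin (R ℓ)) ℝ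

/-- Frobenius norm of a tuple of matrices: `(Σ_ℓ Σ_{i,j} (X_ℓ)_{ij}²)^{1/2}`. -/
noncomputable def fnorm {m n : Fin L → ℕ} (X : ∀ ℓ : Fin L, Matrix (Fin (m ℓ)) (Fin (n ℓ)) ℝ) : ℝ :=
  Real.sqrt (∑ ℓ, ∑ i, ∑ j, (X ℓ i j) ^ 2)

/-- The group `H = ∏_ℓ O(N ℓ)`, as tuples of orthogonal matrices. -/
abbrev HGroup (N : Fin L → ℕ) := ∀ ℓ : Fin L, Matrix.orthogonalGroup (Fin (N ℓ)) ℝ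

/-- The action of `H` on `V`: `(Q · X)_ℓ = Q_ℓ X_ℓ`. -/
def act (Q : HGroup N) (X : V N R) : V N R :=
  fun ℓ => (Q ℓ : Matrix (Fin (N ℓ)) (Fin (N ℓ)) ℝ) * X ℓ

/-- `d_σ(X,Y) = min(‖X−Y‖, ‖X+Y‖)`. -/
noncomputable def dSigma (X Y : V N R) : ℝ := min (fnorm (X - Y)) (fnorm (X + Y))

/-- `d_H(X,Y) = min_{Q ∈ H} ‖X − Q·Y‖`. -/
noncomputable def dH (X Y : V N R) : ℝ := ⨅ Q : HGroup N, fnorm (X - act Q Y)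

/-- The positive semidefinite square root `√(XᵀX)` of the Gram matrix of a single matrix. -/
noncomputable def gramSqrt {n d : ℕ} (X : Matrix (Fin n) (Fin d) ℝ) : Matrix (Fin d) (Fin d) ℝ :=
  ((Matrix.posSemidef_conjTranspose_mul_self X).1.eigenvectorUnitary : Matrix (Fin d) (Fin d) ℝ) *
    Matrix.diagonal ((↑) ∘ (Real.sqrt ·) ∘ (Matrix.posSemidef_conjTranspose_mul_self X).1.eigenvalues) *
    (star ((Matrix.posSemidef_conjTranspose_mul_self X).1.eigenvectorUnitary : Matrix (Fin d) (Fin d) ℝ))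

/-- The tuple `√(XᵀX) = (√(X₁ᵀX₁), …, √(X_LᵀX_L))`. -/
noncomputable def sqrtGram (X : V N R) : ∀ ℓ : Fin L, Matrix (Fin (R ℓ)) (Fin (R ℓ)) ℝ :=
  fun ℓ => gramSqrt (X ℓ)

/-- The second moment: tuple of Gram matrices `XᵀX = (X₁ᵀX₁, …, X_LᵀX_L)`. -/
def gram (X : V N R) : ∀ ℓ : Fin L, Matrix (Fin (R ℓ)) (Fin (R ℓ)) ℝ :=
  fun ℓ => (X ℓ)ᵀ * X ℓ

/-- A set `S ⊆ V` is transverse to the orbits of `H` if whenever `X ∈ S` and `Q·X ∈ S`,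
one has `Q·X = X` or `Q·X = −X`. -/
def Transverse (S : Set (V N R)) : Prop :=
  ∀ X ∈ S, ∀ Q : HGroup N, act Q X ∈ S → act Q X = X ∨ act Q X = -X

end GPR

open scoped MatrixOrder

namespace Matrix

variable {m n : Type*}

lemma trace_fromBlocks [Fintype m] [Fintype n] {α : Type*} [AddCommMonoid α] (A : Matrix m m α)
    (B : Matrix m n α) (C : Matrix n m α) (D : Matrix n n α) :
    trace (fromBlocks A B C D) = trace A + trace D := by
  simp [trace, Fintype.sum_sum_type]

lemma fromBlocks_sub {l o α : Type*} [Sub α] (A : Matrix n l α) (B : Matrix n m α)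
    (C : Matrix o l α) (D : Matrix o m α) (A' : Matrix n l α) (B' : Matrix n m α)
    (C' : Matrix o l α) (D' : Matrix o m α) :
    fromBlocks A B C D - fromBlocks A' B' C' D' =
      fromBlocks (A - A') (B - B') (C - C') (D - D') := by
  ext (_ | _) (_ | _) <;> rfl

lemma trace_mul_transpose_self [Fintype m] [Fintype n] (M : Matrix m n ℝ) :
    trace (M * Mᵀ) = ∑ i, ∑ j, M i j ^ 2 := by
  simp [trace, mul_apply, sq]

section Positivity

variable [Fintype n] [DecidableEq n]

lemma trace_mul_nonneg {A B : Matrix n n ℝ} (hA : 0 ≤ A) (hB : 0 ≤ B) : 0 ≤ trace (A * B) := by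
  have hcycle : trace (A * B) = trace (star (CFC.sqrt A) * B * CFC.sqrt A) := by
    rw [(CFC.sqrt_nonneg A).star_eq, trace_mul_cycle, CFC.sqrt_mul_sqrt_self A]
  rw [hcycle]
  exact (star_left_conjugate_nonneg hB _).posSemidef.trace_nonneg

lemma trace_sq_nonneg {A : Matrix n n ℝ} (hA : IsSelfAdjoint A) : 0 ≤ trace (A ^ 2) := by
  rw [sq]
  nth_rewrite 1 [← hA.star_eq]
  exact (star_mul_self_nonneg A).posSemidef.trace_nonneg

lemma trace_mul_le_trace_abs_mul_abs {S T : Matrix n n ℝ} (hS : IsSelfAdjoint S)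
    (hT : IsSelfAdjoint T) : trace (S * T) ≤ trace (CFC.abs S * CFC.abs T) := by
  rw [← CFC.posPart_add_negPart S, ← CFC.posPart_add_negPart T]
  conv_lhs => rw [← CFC.posPart_sub_negPart S, ← CFC.posPart_sub_negPart T]
  have hpn := trace_mul_nonneg (CFC.posPart_nonneg S) (CFC.negPart_nonneg T)
  have hnp := trace_mul_nonneg (CFC.negPart_nonneg S) (CFC.posPart_nonneg T)
  simp only [Matrix.add_mul, Matrix.mul_add, Matrix.sub_mul, Matrix.mul_sub, trace_add, trace_sub]
  linarith

lemma trace_sq_abs_sub_abs_le {S T : Matrix n n ℝ} (hS : IsSelfAdjoint S)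
    (hT : IsSelfAdjoint T) : trace ((CFC.abs S - CFC.abs T) ^ 2) ≤ trace ((S - T) ^ 2) := by
  have hSS : CFC.abs S * CFC.abs S = S * S := by rw [CFC.abs_mul_abs, hS.star_eq]
  have hTT : CFC.abs T * CFC.abs T = T * T := by rw [CFC.abs_mul_abs, hT.star_eq]
  have := trace_mul_le_trace_abs_mul_abs hS hT
  simp only [sq, Matrix.sub_mul, Matrix.mul_sub, trace_sub, hSS, hTT,
    trace_mul_comm T S, trace_mul_comm (CFC.abs T) (CFC.abs S)]
  linarith

end Positivity

lemma fromBlocks_zero_nonneg [Fintype m] [Fintype n] [DecidableEq m] [DecidableEq n]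
    {A : Matrix m m ℝ} {D : Matrix n n ℝ} (hA : 0 ≤ A) (hD : 0 ≤ D) :
    0 ≤ fromBlocks A 0 0 D := by
  have h : fromBlocks A 0 0 D = star (fromBlocks (CFC.sqrt A) 0 0 (CFC.sqrt D)) *
      fromBlocks (CFC.sqrt A) 0 0 (CFC.sqrt D) := by
    rw [star_eq_conjTranspose, fromBlocks_conjTranspose, fromBlocks_multiply,
      ← star_eq_conjTranspose, ← star_eq_conjTranspose, (CFC.sqrt_nonneg A).star_eq,
      (CFC.sqrt_nonneg D).star_eq, CFC.sqrt_mul_sqrt_self A, CFC.sqrt_mul_sqrt_self D]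
    simp
  rw [h]
  exact star_mul_self_nonneg _

def hermitianDilation (X : Matrix m n ℝ) : Matrix (n ⊕ m) (n ⊕ m) ℝ :=
  fromBlocks 0 Xᵀ X 0

lemma isSelfAdjoint_hermitianDilation (X : Matrix m n ℝ) :
    IsSelfAdjoint (hermitianDilation X) := by
  simp [IsSelfAdjoint, hermitianDilation, star_eq_conjTranspose, fromBlocks_transpose]

lemma hermitianDilation_sub (X Y : Matrix m n ℝ) :
    hermitianDilation (X - Y) = hermitianDilation X - hermitianDilation Y := by
  rw [hermitianDilation, hermitianDilation, hermitianDilation, fromBlocks_sub, transpose_sub]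
  simp

lemma hermitianDilation_mul_self [Fintype m] [Fintype n] (X : Matrix m n ℝ) :
    hermitianDilation X * hermitianDilation X = fromBlocks (Xᵀ * X) 0 0 (X * Xᵀ) := by
  simp [hermitianDilation, fromBlocks_multiply]

section Dilation

variable [Fintype m] [Fintype n] [DecidableEq m] [DecidableEq n]

lemma abs_hermitianDilation (X : Matrix m n ℝ) :
    CFC.abs (hermitianDilation X) = fromBlocks (CFC.sqrt (Xᵀ * X)) 0 0 (CFC.sqrt (X * Xᵀ)) := by
  have hX : 0 ≤ Xᵀ * X := (posSemidef_conjTranspose_mul_self X).nonneg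
  have hX' : 0 ≤ X * Xᵀ := (posSemidef_self_mul_conjTranspose X).nonneg
  rw [CFC.abs, (isSelfAdjoint_hermitianDilation X).star_eq, hermitianDilation_mul_self]
  refine CFC.sqrt_unique ?_ (fromBlocks_zero_nonneg (CFC.sqrt_nonneg _) (CFC.sqrt_nonneg _))
  simp [fromBlocks_multiply, CFC.sqrt_mul_sqrt_self _ hX, CFC.sqrt_mul_sqrt_self _ hX']

theorem trace_sq_sqrt_transpose_mul_self_sub_le (X Y : Matrix m n ℝ) :
    trace ((CFC.sqrt (Xᵀ * X) - CFC.sqrt (Yᵀ * Y)) ^ 2) ≤ 2 * trace ((X - Y) * (X - Y)ᵀ) := by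
  have hdil := trace_sq_abs_sub_abs_le (isSelfAdjoint_hermitianDilation X)
    (isSelfAdjoint_hermitianDilation Y)
  rw [abs_hermitianDilation, abs_hermitianDilation, fromBlocks_sub, ← hermitianDilation_sub,
    sq, sq, hermitianDilation_mul_self, fromBlocks_multiply, trace_fromBlocks,
    trace_fromBlocks] at hdil
  simp only [Matrix.mul_zero, add_zero, zero_add, sub_zero] at hdil
  rw [trace_mul_comm (X - Y)ᵀ] at hdil
  have hcross : 0 ≤ trace ((CFC.sqrt (X * Xᵀ) - CFC.sqrt (Y * Yᵀ)) ^ 2) :=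
    trace_sq_nonneg ((CFC.sqrt_nonneg _).isSelfAdjoint.sub (CFC.sqrt_nonneg _).isSelfAdjoint)
  rw [sq] at hcross ⊢
  linarith

end Dilation

end Matrix

namespace GPR

variable {L : ℕ} {N R : Fin L → ℕ}

lemma gramSqrt_eq_sqrt {n d : ℕ} (X : Matrix (Fin n) (Fin d) ℝ) :
    gramSqrt X = CFC.sqrt (Xᵀ * X) := by
  have hX : (Xᵀ * X).PosSemidef := posSemidef_conjTranspose_mul_self X
  rw [CFC.sqrt_eq_real_sqrt _ hX.nonneg, cfcₙ_eq_cfc, hX.1.cfc_eq]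
  rfl

lemma gramSqrt_neg {n d : ℕ} (X : Matrix (Fin n) (Fin d) ℝ) : gramSqrt (-X) = gramSqrt X := by
  simp [gramSqrt_eq_sqrt]

lemma sum_sq_gramSqrt_sub_le {n d : ℕ} (X Y : Matrix (Fin n) (Fin d) ℝ) :
    ∑ i, ∑ j, (gramSqrt X - gramSqrt Y) i j ^ 2 ≤ 2 * ∑ i, ∑ j, (X - Y) i j ^ 2 := by
  have hsymm : (CFC.sqrt (Xᵀ * X) - CFC.sqrt (Yᵀ * Y))ᵀ = CFC.sqrt (Xᵀ * X) - CFC.sqrt (Yᵀ * Y) :=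
    ((CFC.sqrt_nonneg _).isSelfAdjoint.sub (CFC.sqrt_nonneg _).isSelfAdjoint).star_eq
  rw [← trace_mul_transpose_self, ← trace_mul_transpose_self, gramSqrt_eq_sqrt, gramSqrt_eq_sqrt,
    hsymm, ← sq]
  exact trace_sq_sqrt_transpose_mul_self_sub_le X Y

lemma fnorm_le_sqrt_mul_fnorm {m n m' n' : Fin L → ℕ}
    (A : ∀ ℓ, Matrix (Fin (m ℓ)) (Fin (n ℓ)) ℝ) (B : ∀ ℓ, Matrix (Fin (m' ℓ)) (Fin (n' ℓ)) ℝ)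
    {c : ℝ} (hc : 0 ≤ c) (h : ∀ ℓ, ∑ i, ∑ j, A ℓ i j ^ 2 ≤ c * ∑ i, ∑ j, B ℓ i j ^ 2) :
    fnorm A ≤ Real.sqrt c * fnorm B := by
  rw [fnorm, fnorm, ← Real.sqrt_mul hc, Finset.mul_sum]
  exact Real.sqrt_le_sqrt (Finset.sum_le_sum fun ℓ _ => h ℓ)

lemma sqrtGram_neg (X : V N R) : sqrtGram (-X) = sqrtGram X :=
  funext fun ℓ => gramSqrt_neg (X ℓ)

lemma fnorm_sqrtGram_sub_le (X Y : V N R) :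
    fnorm (sqrtGram X - sqrtGram Y) ≤ Real.sqrt 2 * fnorm (X - Y) :=
  fnorm_le_sqrt_mul_fnorm _ _ zero_le_two fun ℓ => sum_sq_gramSqrt_sub_le (X ℓ) (Y ℓ)

theorem sqrtGram_norm_le_sqrt_two_mul_dSigma_general
    (L : ℕ) (N R : Fin L → ℕ)
    (X Y : V N R) :
    fnorm (sqrtGram X - sqrtGram Y) ≤ Real.sqrt 2 * dSigma X Y := by
  rw [dSigma, mul_min_of_nonneg _ _ (Real.sqrt_nonneg 2)]
  refine le_min (fnorm_sqrtGram_sub_le X Y) ?_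
  simpa [sqrtGram_neg] using fnorm_sqrtGram_sub_le X (-Y)

/-- For all `X, Y ∈ V`, `‖√(XᵀX) − √(YᵀY)‖ ≤ √2 · d_σ(X,Y)`. -/
theorem sqrtGram_norm_le_sqrt_two_mul_dSigma
    (L : ℕ) (hL : 0 < L) (N R : Fin L → ℕ) (hN : ∀ ℓ, 0 < N ℓ) (hR : ∀ ℓ, 0 < R ℓ)
    (X Y : V N R) :
    fnorm (sqrtGram X - sqrtGram Y) ≤ Real.sqrt 2 * dSigma X Y :=
  sqrtGram_norm_le_sqrt_two_mul_dSigma_general L N R X Y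

end GPR
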